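/- Let S⁽ᵖ⁾_n = Σ_{P ∈ 𝒫(n)} S(P) denote the total Sackin index over all phylogenetic trees on n taxa, and a_n = |𝒫(n)|. Then for all n ≥ 2, S⁽ᵖ⁾_{n+1} + (n+1)·a_{n+1} = 2(n+1)·(S⁽ᵖ⁾_n + n·a_n). -/

import Mathlib

/-- Full binary rooted trees with leaves carrying data of type `α`. -/
inductive BTree (α : Type) : Type
  | leaf (a : α) : BTree α
  | node (l r : BTree α) : BTree α

namespace BTree

/-- Number of leaves below (the subtree rooted at) a node. -/
def leaves {α} : BTree α → ℕ
  | leaf _ => 1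
  | node l r => leaves l + leaves r

/-- Sackin index: sum over internal nodes of the number of leaves below that node. -/
def sackin {α} : BTree α → ℕ
  | leaf _ => 0
  | node l r => (leaves l + leaves r) + sackin l + sackin r

/-- Colless index: sum over internal nodes of the absolute difference of leaf counts
of the two children. -/
def colless {α} : BTree α → ℕ
  | leaf _ => 0
  | node l r => ((leaves l : ℤ) - (leaves r : ℤ)).natAbs + colless l + colless r

/-- Sum over all leaves of their depth (number of edges from the root). -/
def depthSum {α} : BTree α → ℕ
  | leaf _ => 0
  | node l r => (depthSum l + leaves l) + (depthSum r + leaves r)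

/-- Sum of leaf counts `ℓ_T(u)` over all nodes `u` (including leaves, each counting 1). -/
def totalL {α} : BTree α → ℕ
  | leaf _ => 1
  | node l r => (leaves l + leaves r) + totalL l + totalL r

/-- Sum over internal nodes of the minimum of the leaf counts of the two children. -/
def minSum {α} : BTree α → ℕ
  | leaf _ => 0
  | node l r => min (leaves l) (leaves r) + minSum l + minSum r

/-- Number of edges strictly below a node (each node of the subtree other than
its root contributes the edge to its parent). -/
def edgesBelow {α} : BTree α → ℕ
  | leaf _ => 0
  | node l r => 2 + edgesBelow l + edgesBelow r

/-- Number of internal (non-leaf) nodes. -/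
def internals {α} : BTree α → ℕ
  | leaf _ => 0
  | node l r => 1 + internals l + internals r

/-- `Subtree s t` means the subtree `s` occurs in `t`; thus `Subtree (node v w) T`
expresses that `T` has an internal node whose two child subtrees are `v` and `w`. -/
inductive Subtree {α} : BTree α → BTree α → Prop
  | refl (t) : Subtree t t
  | left {s l r} : Subtree s l → Subtree s (node l r)
  | right {s l r} : Subtree s r → Subtree s (node l r)

/-- Generating relation of tree-shape isomorphism: swapping the two children of a node. -/
inductive Rel {α} : BTree α → BTree α → Prop
  | swap (l r) : Rel (node l r) (node r l)
  | congrL {l l'} (r) : Rel l l' → Rel (node l r) (node l' r)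
  | congrR (l) {r r'} : Rel r r' → Rel (node l r) (node l r')

/-- The list of leaf labels, left to right. -/
def leafList {α} : BTree α → List α
  | leaf a => [a]
  | node l r => leafList l ++ leafList r

end BTree

/-- Binary tree shapes: full binary rooted trees up to isomorphism (children unordered). -/
def Shape : Type := Quot (@BTree.Rel Unit)

noncomputable def Shape.leaves (q : Shape) : ℕ := BTree.leaves q.out
noncomputable def Shape.sackin (q : Shape) : ℕ := BTree.sackin q.out
noncomputable def Shape.colless (q : Shape) : ℕ := BTree.colless q.out

/-- `bSh n` = number of binary tree shapes with `n` leaves. -/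
noncomputable def bSh (n : ℕ) : ℕ := Set.ncard {q : Shape | q.leaves = n}

/-- `S_n`: total Sackin index over all tree shapes with `n` leaves. -/
noncomputable def Snum (n : ℕ) : ℕ := ∑ᶠ q ∈ {q : Shape | q.leaves = n}, Shape.sackin q

/-- `D_n = (1/2) Σ_{T ∈ 𝒯(n)} (S(T) - C(T))`. -/
noncomputable def Dnum (n : ℕ) : ℕ :=
  (∑ᶠ q ∈ {q : Shape | q.leaves = n}, (Shape.sackin q - Shape.colless q)) / 2

/-- Phylogenetic trees as labelled full binary rooted trees up to isomorphism. -/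
def PTree : Type := Quot (@BTree.Rel ℕ)

/-- A labelled tree is a phylogenetic tree on `n` taxa if its leaf labels are
exactly `{1, ..., n}`, each occurring once. -/
def BTree.isPhylo (n : ℕ) (t : BTree ℕ) : Prop :=
  (BTree.leafList t).Perm ((List.range n).map (· + 1))

/-- The set `𝒫(n)` of phylogenetic trees on `n` taxa. -/
noncomputable def PhyloSet (n : ℕ) : Set PTree := {q | BTree.isPhylo n q.out}

/-- `a_n = |𝒫(n)|`. -/
noncomputable def aP (n : ℕ) : ℕ := Set.ncard (PhyloSet n)

/-- Total Sackin index over all phylogenetic trees on `n` taxa. -/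
noncomputable def SpTotal (n : ℕ) : ℕ := ∑ᶠ q ∈ PhyloSet n, BTree.sackin (Quot.out q)

/-- All trees obtained from `t` by attaching a new leaf labelled `x` on each of the
`2·leaves t - 1` edges of `t` (including the open edge entering the root). -/
def BTree.attach (x : ℕ) : BTree ℕ → List (BTree ℕ)
  | .leaf a => [.node (.leaf a) (.leaf x)]
  | .node l r =>
      .node (.node l r) (.leaf x) ::
        ((BTree.attach x l).map (fun l' => .node l' r) ++
         (BTree.attach x r).map (fun r' => .node l r'))


/-!
Every phylogenetic tree on `n + 1` taxa arises in exactly one way from a tree on `n` taxa by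
attaching the leaf `n + 1` to one of its `2n - 1` edges: deleting that leaf recovers the smaller
tree, and distinct edges of one tree give non-isomorphic trees because the sibling of `n + 1`
has a different leaf set (a tree with distinct labels has distinct clusters). Attaching above a
node `v` creates a node with `ℓ(v) + 1` leaves and adds a leaf below every ancestor of `v`;
summed over all edges this gives `2(n + 1) S(T) + (n + 1)`. Hence
`S_{n+1} = 2(n + 1) S_n + (n + 1) a_n` and `a_{n+1} = (2n - 1) a_n`.
-/

deriving instance DecidableEq for BTree

namespace BTree

variable {α : Type}

theorem leaves_pos (t : BTree α) : 0 < t.leaves := by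
  induction t with
  | leaf => exact Nat.one_pos
  | node _ _ ihl _ => exact Nat.add_pos_left ihl _

def leafMS (t : BTree α) : Multiset α := t.leafList

@[simp] theorem leafMS_leaf (a : α) : leafMS (leaf a) = {a} := rfl

@[simp] theorem leafMS_node (l r : BTree α) : leafMS (node l r) = leafMS l + leafMS r := by
  simp [leafMS, leafList]

@[simp] theorem card_leafMS (t : BTree α) : Multiset.card t.leafMS = t.leaves := by
  induction t with
  | leaf => rfl
  | node l r ihl ihr => simp [leaves, ihl, ihr]

@[simp] theorem mem_leafMS {a : α} {t : BTree α} : a ∈ t.leafMS ↔ a ∈ t.leafList :=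
  Multiset.mem_coe

theorem leafMS_ne_zero (t : BTree α) : t.leafMS ≠ 0 :=
  Multiset.card_pos.1 (by simpa using t.leaves_pos)

theorem ne_leaf_of_notMem {x : α} {t : BTree α} (h : x ∉ t.leafList) : t ≠ leaf x := by
  rintro rfl
  simp [leafList] at h

theorem eq_leaf_of_leafMS_eq_singleton {a : α} : ∀ {t : BTree α}, t.leafMS = {a} → t = leaf a
  | leaf _, h => by rw [leafMS_leaf, Multiset.singleton_inj] at h; rw [h]
  | node l r, h => by
      have := congrArg Multiset.card h
      simp only [card_leafMS, leaves, Multiset.card_singleton] at this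
      have := l.leaves_pos
      have := r.leaves_pos
      omega

theorem Rel.leafMS_eq {t t' : BTree α} (h : Rel t t') : t.leafMS = t'.leafMS := by
  induction h with
  | swap l r => simp [add_comm]
  | congrL r _ ih => simp [ih]
  | congrR l _ ih => simp [ih]

theorem Rel.leaves_eq {t t' : BTree α} (h : Rel t t') : t.leaves = t'.leaves := by
  rw [← card_leafMS, ← card_leafMS, h.leafMS_eq]

theorem Rel.sackin_eq {t t' : BTree α} (h : Rel t t') : t.sackin = t'.sackin := by
  induction h with
  | swap l r => simp only [sackin]; omega
  | congrL r h ih => simp only [sackin, ih, h.leaves_eq]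
  | congrR l h ih => simp only [sackin, ih, h.leaves_eq]

theorem Rel.ne_leaf {t t' : BTree α} (h : Rel t t') (a : α) : t ≠ leaf a ∧ t' ≠ leaf a := by
  cases h <;> exact ⟨nofun, nofun⟩

def subtrees : BTree α → List (BTree α)
  | leaf a => [leaf a]
  | node l r => node l r :: (subtrees l ++ subtrees r)

theorem leafMS_le_of_mem_subtrees {u : BTree α} :
    ∀ {t : BTree α}, u ∈ t.subtrees → u.leafMS ≤ t.leafMS
  | leaf _, h => by rw [subtrees, List.mem_singleton] at h; rw [h]
  | node l r, h => by
      simp only [subtrees, List.mem_cons, List.mem_append] at h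
      rcases h with rfl | h | h
      · exact le_rfl
      · exact (leafMS_le_of_mem_subtrees h).trans (by simp)
      · exact (leafMS_le_of_mem_subtrees h).trans (by simp)

theorem leaves_le_of_mem_subtrees {u t : BTree α} (h : u ∈ t.subtrees) :
    u.leaves ≤ t.leaves := by
  simpa using Multiset.card_le_card (leafMS_le_of_mem_subtrees h)

theorem nodup_map_leafMS_subtrees :
    ∀ {t : BTree α}, t.leafList.Nodup → (t.subtrees.map leafMS).Nodup
  | leaf a, _ => List.nodup_singleton _
  | node l r, hnd => by
      rw [leafList, List.nodup_append] at hnd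
      obtain ⟨hl, hr, hdisj⟩ := hnd
      simp only [subtrees, List.map_cons, List.map_append, List.nodup_cons, List.nodup_append,
        List.mem_append, List.mem_map]
      refine ⟨?_, nodup_map_leafMS_subtrees hl, nodup_map_leafMS_subtrees hr, ?_⟩
      · have := l.leaves_pos
        have := r.leaves_pos
        rintro (⟨u, hu, he⟩ | ⟨u, hu, he⟩) <;>
        · have hle := leaves_le_of_mem_subtrees hu
          rw [← card_leafMS, he] at hle
          simp only [leafMS_node, Multiset.card_add, card_leafMS] at hle
          omega
      · rintro _ ⟨u, hu, rfl⟩ _ ⟨v, hv, rfl⟩ huv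
        obtain ⟨a, ha⟩ := Multiset.exists_mem_of_ne_zero u.leafMS_ne_zero
        exact hdisj a (mem_leafMS.1 (Multiset.mem_of_le (leafMS_le_of_mem_subtrees hu) ha))
          a (mem_leafMS.1 (Multiset.mem_of_le (leafMS_le_of_mem_subtrees hv) (huv ▸ ha))) rfl

variable [DecidableEq α]

def siblings (x : α) : BTree α → Multiset (Multiset α)
  | leaf _ => 0
  | node l r => (if l = leaf x then {r.leafMS} else 0) + (if r = leaf x then {l.leafMS} else 0)
      + siblings x l + siblings x r

theorem Rel.siblings_eq {x : α} {t t' : BTree α} (h : Rel t t') :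
    t.siblings x = t'.siblings x := by
  induction h with
  | swap l r => simp only [siblings]; abel
  | congrL r h ih =>
      simp only [siblings, if_neg (h.ne_leaf x).1, if_neg (h.ne_leaf x).2, ih, h.leafMS_eq]
  | congrR l h ih =>
      simp only [siblings, if_neg (h.ne_leaf x).1, if_neg (h.ne_leaf x).2, ih, h.leafMS_eq]

theorem siblings_eq_zero {x : α} : ∀ {t : BTree α}, x ∉ t.leafList → t.siblings x = 0
  | leaf _, _ => rfl
  | node l r, h => by
      simp only [leafList, List.mem_append, not_or] at h
      simp [siblings, ne_leaf_of_notMem h.1, ne_leaf_of_notMem h.2, siblings_eq_zero h.1,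
        siblings_eq_zero h.2]

def detach (x : α) : BTree α → BTree α
  | leaf a => leaf a
  | node l r =>
      if l = leaf x then r else if r = leaf x then l else node (detach x l) (detach x r)

theorem detach_of_notMem {x : α} : ∀ {t : BTree α}, x ∉ t.leafList → t.detach x = t
  | leaf _, _ => rfl
  | node l r, h => by
      simp only [leafList, List.mem_append, not_or] at h
      simp [detach, ne_leaf_of_notMem h.1, ne_leaf_of_notMem h.2, detach_of_notMem h.1,
        detach_of_notMem h.2]

end BTree

namespace BTree

variable {x : ℕ}

theorem length_attach (x : ℕ) (t : BTree ℕ) : (t.attach x).length + 1 = 2 * t.leaves := by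
  induction t with
  | leaf => rfl
  | node l r ihl ihr =>
      simp only [attach, List.length_cons, List.length_append, List.length_map, leaves]
      omega

theorem node_leaf_mem_attach (x : ℕ) (t : BTree ℕ) : node t (leaf x) ∈ t.attach x := by
  cases t <;> simp [attach]

theorem ne_leaf_of_mem_attach {t s : BTree ℕ} (hs : s ∈ t.attach x) (a : ℕ) :
    s ≠ leaf a := by
  cases t with
  | leaf => rw [attach, List.mem_singleton] at hs; rw [hs]; nofun
  | node l r =>
      simp only [attach, List.mem_cons, List.mem_append, List.mem_map] at hs
      rcases hs with rfl | ⟨_, _, rfl⟩ | ⟨_, _, rfl⟩ <;> nofun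

theorem leafMS_of_mem_attach :
    ∀ {t s : BTree ℕ}, s ∈ t.attach x → s.leafMS = x ::ₘ t.leafMS
  | leaf _, _, hs => by
      rw [attach, List.mem_singleton] at hs
      rw [hs, leafMS_node, add_comm, leafMS_leaf, Multiset.singleton_add]
  | node l r, _, hs => by
      simp only [attach, List.mem_cons, List.mem_append, List.mem_map] at hs
      rcases hs with rfl | ⟨l', hl', rfl⟩ | ⟨r', hr', rfl⟩
      · rw [leafMS_node, add_comm, leafMS_leaf, Multiset.singleton_add]
      · simp [leafMS_of_mem_attach hl']
      · simp [leafMS_of_mem_attach hr']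

theorem leaves_of_mem_attach {t s : BTree ℕ} (hs : s ∈ t.attach x) :
    s.leaves = t.leaves + 1 := by
  rw [← card_leafMS, ← card_leafMS, leafMS_of_mem_attach hs, Multiset.card_cons]

theorem sum_sackin_attach (x : ℕ) (t : BTree ℕ) :
    ((t.attach x).map sackin).sum = 2 * (t.leaves + 1) * t.sackin + (t.leaves + 1) := by
  induction t with
  | leaf => simp [attach, sackin, leaves]
  | node l r ihl ihr =>
      have e1 : (l.attach x).map (sackin ∘ fun l' => node l' r) =
          (l.attach x).map fun l' => (l.leaves + 1 + r.leaves + r.sackin) + l'.sackin :=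
        List.map_congr_left fun a ha => by
          simp only [Function.comp, sackin, leaves_of_mem_attach ha]; ring
      have e2 : (r.attach x).map (sackin ∘ fun r' => node l r') =
          (r.attach x).map fun r' => (l.leaves + (r.leaves + 1) + l.sackin) + r'.sackin :=
        List.map_congr_left fun a ha => by
          simp only [Function.comp, sackin, leaves_of_mem_attach ha]
      have hl := length_attach x l
      have hr := length_attach x r
      simp only [attach, List.map_cons, List.map_append, List.map_map, List.sum_cons,
        List.sum_append, e1, e2, List.sum_map_add, List.map_const', List.sum_replicate,
        smul_eq_mul, ihl, ihr]
      simp only [sackin, leaves]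
      linear_combination (l.leaves + 1 + r.leaves + r.sackin) * hl
        + (l.leaves + (r.leaves + 1) + l.sackin) * hr

theorem detach_of_mem_attach : ∀ {t s : BTree ℕ}, x ∉ t.leafList → s ∈ t.attach x →
    s.detach x = t
  | leaf a, _, hx, hs => by
      rw [attach, List.mem_singleton] at hs
      simp [hs, detach, ne_leaf_of_notMem hx]
  | node l r, _, hx, hs => by
      simp only [leafList, List.mem_append, not_or] at hx
      simp only [attach, List.mem_cons, List.mem_append, List.mem_map] at hs
      rcases hs with rfl | ⟨l', hl', rfl⟩ | ⟨r', hr', rfl⟩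
      · simp [detach]
      · simp [detach, ne_leaf_of_mem_attach hl', ne_leaf_of_notMem hx.2,
          detach_of_mem_attach hx.1 hl', detach_of_notMem hx.2]
      · simp [detach, ne_leaf_of_mem_attach hr', ne_leaf_of_notMem hx.1,
          detach_of_mem_attach hx.2 hr', detach_of_notMem hx.1]

/-- Attaching `x` above the subtree `u` makes `u` the sibling of `x`. -/
theorem map_siblings_attach : ∀ {t : BTree ℕ}, x ∉ t.leafList →
    (t.attach x).map (siblings x) = t.subtrees.map fun u => {u.leafMS}
  | leaf a, hx => by simp [attach, subtrees, siblings, ne_leaf_of_notMem hx]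
  | node l r, hx => by
      simp only [leafList, List.mem_append, not_or] at hx
      have e1 : (l.attach x).map (siblings x ∘ fun l' => node l' r) =
          (l.attach x).map (siblings x) :=
        List.map_congr_left fun a ha => by
          simp [siblings, ne_leaf_of_mem_attach ha, ne_leaf_of_notMem hx.2, siblings_eq_zero hx.2]
      have e2 : (r.attach x).map (siblings x ∘ fun r' => node l r') =
          (r.attach x).map (siblings x) :=
        List.map_congr_left fun a ha => by
          simp [siblings, ne_leaf_of_mem_attach ha, ne_leaf_of_notMem hx.1, siblings_eq_zero hx.1]
      simp [attach, subtrees, List.map_map, e1, e2, map_siblings_attach hx.1,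
        map_siblings_attach hx.2, siblings, ne_leaf_of_notMem hx.1, ne_leaf_of_notMem hx.2,
        siblings_eq_zero hx.1, siblings_eq_zero hx.2]

end BTree

namespace PTree

def mk (t : BTree ℕ) : PTree := Quot.mk BTree.Rel t

theorem sound {t t' : BTree ℕ} (h : BTree.Rel t t') : mk t = mk t' := Quot.sound h

@[elab_as_elim]
theorem ind {motive : PTree → Prop} (mk : ∀ t, motive (mk t)) (q : PTree) : motive q :=
  Quot.ind mk q

theorem mk_out (q : PTree) : mk q.out = q := Quot.out_eq q

def node : PTree → PTree → PTree :=
  Quot.map₂ BTree.node (fun l _ _ h => .congrR l h) (fun _ _ r h => .congrL r h)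

@[simp] theorem node_mk (l r : BTree ℕ) : node (mk l) (mk r) = mk (.node l r) := rfl

theorem node_comm (p q : PTree) : node p q = node q p := by
  induction p using PTree.ind
  induction q using PTree.ind
  exact sound (.swap _ _)

end PTree

namespace BTree

open PTree (mk sound node_mk node_comm)

theorem Rel.mk_detach_eq {x : ℕ} {t t' : BTree ℕ} (h : Rel t t') :
    mk (t.detach x) = mk (t'.detach x) := by
  induction h with
  | swap l r =>
      by_cases hl : l = leaf x <;> by_cases hr : r = leaf x
      · rw [hl, hr]
      all_goals simp only [detach, hl, hr, if_true, if_false]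
      exact sound (.swap _ _)
  | congrL r h ih =>
      simp only [detach, if_neg (h.ne_leaf x).1, if_neg (h.ne_leaf x).2]
      split_ifs
      · exact sound h
      · rw [← node_mk, ih, node_mk]
  | congrR l h ih =>
      simp only [detach, if_neg (h.ne_leaf x).1, if_neg (h.ne_leaf x).2]
      split_ifs
      · exact sound h
      · rw [← node_mk, ih, node_mk]

def attachClasses (x : ℕ) (t : BTree ℕ) : Multiset PTree := ((t.attach x).map mk : List PTree)

theorem attachClasses_node (x : ℕ) (l r : BTree ℕ) :
    (node l r).attachClasses x =
      PTree.node (PTree.node (mk l) (mk r)) (mk (leaf x)) ::ₘ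
        ((l.attachClasses x).map (PTree.node · (mk r)) +
          (r.attachClasses x).map (PTree.node (mk l) ·)) := by
  simp [attachClasses, attach, Function.comp_def]

theorem Rel.attachClasses_eq {x : ℕ} {t t' : BTree ℕ} (h : Rel t t') :
    t.attachClasses x = t'.attachClasses x := by
  induction h with
  | swap l r =>
      have hcomm (q : PTree) : (PTree.node · q) = (PTree.node q ·) :=
        funext fun p => node_comm p q
      rw [attachClasses_node, attachClasses_node, node_comm (mk l), add_comm, hcomm, hcomm]
  | congrL r h ih => rw [attachClasses_node, attachClasses_node, ih, sound h]
  | congrR l h ih => rw [attachClasses_node, attachClasses_node, ih, sound h]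

theorem exists_mk_mem_attachClasses {x : ℕ} :
    ∀ {s : BTree ℕ}, x ∈ s.leafList → s ≠ leaf x →
      ∃ t : BTree ℕ, mk s ∈ t.attachClasses x
  | leaf _, hx, hs => by simp_all [leafList]
  | node l r, hx, _ => by
      by_cases hl : l = leaf x
      · refine ⟨r, ?_⟩
        rw [hl, ← node_mk, node_comm, node_mk]
        exact List.mem_map_of_mem (node_leaf_mem_attach x r)
      by_cases hr : r = leaf x
      · exact ⟨l, hr ▸ List.mem_map_of_mem (node_leaf_mem_attach x l)⟩
      rcases List.mem_append.1 hx with hx | hx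
      · obtain ⟨t, ht⟩ := exists_mk_mem_attachClasses hx hl
        refine ⟨node t r, ?_⟩
        rw [attachClasses_node, ← node_mk]
        exact Multiset.mem_cons_of_mem (Multiset.mem_add.2
          (Or.inl (Multiset.mem_map_of_mem (PTree.node · (mk r)) ht)))
      · obtain ⟨t, ht⟩ := exists_mk_mem_attachClasses hx hr
        refine ⟨node l t, ?_⟩
        rw [attachClasses_node, ← node_mk]
        exact Multiset.mem_cons_of_mem (Multiset.mem_add.2
          (Or.inr (Multiset.mem_map_of_mem (PTree.node (mk l) ·) ht)))

end BTree

namespace PTree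

open BTree (Rel attachClasses)

def leaves : PTree → ℕ := Quot.lift BTree.leaves fun _ _ h => h.leaves_eq

def sackin : PTree → ℕ := Quot.lift BTree.sackin fun _ _ h => h.sackin_eq

def leafMS : PTree → Multiset ℕ := Quot.lift BTree.leafMS fun _ _ h => h.leafMS_eq

def siblings (x : ℕ) : PTree → Multiset (Multiset ℕ) :=
  Quot.lift (BTree.siblings x) fun _ _ h => h.siblings_eq

def detach (x : ℕ) : PTree → PTree :=
  Quot.lift (fun t => mk (t.detach x)) fun _ _ h => h.mk_detach_eq

def attach (x : ℕ) : PTree → Multiset PTree :=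
  Quot.lift (attachClasses x) fun _ _ h => h.attachClasses_eq

@[simp] theorem leaves_mk (t : BTree ℕ) : (mk t).leaves = t.leaves := rfl
@[simp] theorem sackin_mk (t : BTree ℕ) : (mk t).sackin = t.sackin := rfl
@[simp] theorem leafMS_mk (t : BTree ℕ) : (mk t).leafMS = t.leafMS := rfl
@[simp] theorem siblings_mk (x : ℕ) (t : BTree ℕ) : (mk t).siblings x = t.siblings x := rfl
@[simp] theorem attach_mk (x : ℕ) (t : BTree ℕ) : (mk t).attach x = t.attachClasses x := rfl

theorem sackin_out (q : PTree) : q.out.sackin = q.sackin := congrArg sackin (mk_out q)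

theorem leafMS_out (q : PTree) : q.out.leafMS = q.leafMS := congrArg leafMS (mk_out q)

theorem card_leafMS (q : PTree) : Multiset.card q.leafMS = q.leaves := by
  induction q using PTree.ind
  exact BTree.card_leafMS _

theorem card_attach (x : ℕ) (q : PTree) : Multiset.card (q.attach x) + 1 = 2 * q.leaves := by
  induction q using PTree.ind
  simpa [attachClasses] using BTree.length_attach x _

theorem sum_sackin_attach (x : ℕ) (q : PTree) :
    ((q.attach x).map sackin).sum = 2 * (q.leaves + 1) * q.sackin + (q.leaves + 1) := by
  induction q using PTree.ind
  simpa [attachClasses, Function.comp_def] using BTree.sum_sackin_attach x _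

theorem leafMS_of_mem_attach {x : ℕ} {p q : PTree} (h : p ∈ q.attach x) :
    p.leafMS = x ::ₘ q.leafMS := by
  induction q using PTree.ind
  obtain ⟨s, hs, rfl⟩ := List.mem_map.1 (Multiset.mem_coe.1 h)
  exact BTree.leafMS_of_mem_attach hs

theorem detach_of_mem_attach {x : ℕ} {p q : PTree} (hx : x ∉ q.leafMS) (h : p ∈ q.attach x) :
    p.detach x = q := by
  induction q using PTree.ind
  obtain ⟨s, hs, rfl⟩ := List.mem_map.1 (Multiset.mem_coe.1 h)
  exact congrArg mk (BTree.detach_of_mem_attach (mt BTree.mem_leafMS.2 hx) hs)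

/-- The sibling of `x` tells the attachments of `x` to one tree apart. -/
theorem nodup_attach {x : ℕ} {q : PTree} (hx : x ∉ q.leafMS) (hnd : q.leafMS.Nodup) :
    (q.attach x).Nodup := by
  induction q using PTree.ind with | mk t
  have hsib : (((t.attach x).map mk).map (siblings x)).Nodup := by
    simp only [List.map_map, Function.comp_def, siblings_mk]
    rw [BTree.map_siblings_attach (mt BTree.mem_leafMS.2 hx)]
    have hcl := (BTree.nodup_map_leafMS_subtrees (Multiset.coe_nodup.1 hnd)).map
      (f := ({·} : Multiset ℕ → Multiset (Multiset ℕ))) fun _ _ => Multiset.singleton_inj.1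
    rwa [List.map_map] at hcl
  exact Multiset.coe_nodup.2 (hsib.of_map _)

theorem exists_mem_attach {x : ℕ} {p : PTree} (hx : x ∈ p.leafMS) (hp : 1 < p.leaves) :
    ∃ q : PTree, p ∈ q.attach x := by
  induction p using PTree.ind with | mk s
  have hs : s ≠ .leaf x := by rintro rfl; exact absurd hp (lt_irrefl 1)
  obtain ⟨t, ht⟩ := BTree.exists_mk_mem_attachClasses (BTree.mem_leafMS.1 hx) hs
  exact ⟨mk t, ht⟩

end PTree

theorem Multiset.Nodup.finsum_mem_eq_sum_map {α M : Type*} [AddCommMonoid M] {s : Multiset α}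
    (hs : s.Nodup) (f : α → M) : ∑ᶠ a ∈ {a | a ∈ s}, f a = (s.map f).sum := by
  classical
  rw [show {a | a ∈ s} = (s.toFinset : Set α) by ext; simp, finsum_mem_coe_finset,
    Finset.sum_eq_multiset_sum, Multiset.toFinset_val, Multiset.dedup_eq_self.2 hs]

def taxa (n : ℕ) : Multiset ℕ := ((List.range n).map (· + 1) : List ℕ)

theorem mem_taxa {n a : ℕ} : a ∈ taxa n ↔ 1 ≤ a ∧ a ≤ n := by
  simp only [taxa, Multiset.mem_coe, List.mem_map, List.mem_range]
  constructor
  · rintro ⟨b, hb, rfl⟩; omega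
  · intro h; exact ⟨a - 1, by omega, by omega⟩

theorem nodup_taxa (n : ℕ) : (taxa n).Nodup :=
  Multiset.coe_nodup.2 (List.nodup_range.map (add_left_injective 1))

theorem card_taxa (n : ℕ) : Multiset.card (taxa n) = n := by
  simp [taxa]

theorem taxa_succ (n : ℕ) : taxa (n + 1) = (n + 1) ::ₘ taxa n := by
  rw [taxa, taxa, List.range_succ, List.map_append, ← Multiset.coe_add, add_comm]
  rfl

theorem mem_phyloSet {n : ℕ} {q : PTree} : q ∈ PhyloSet n ↔ q.leafMS = taxa n := by
  rw [← PTree.leafMS_out]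
  exact Multiset.coe_eq_coe.symm

theorem leaves_of_mem_phyloSet {n : ℕ} {q : PTree} (hq : q ∈ PhyloSet n) : q.leaves = n := by
  rw [← PTree.card_leafMS, mem_phyloSet.1 hq, card_taxa]

theorem succ_notMem_leafMS {n : ℕ} {q : PTree} (hq : q ∈ PhyloSet n) : n + 1 ∉ q.leafMS := by
  rw [mem_phyloSet.1 hq, mem_taxa]
  omega

theorem mem_phyloSet_succ_iff {n : ℕ} (hn : 1 ≤ n) {p : PTree} :
    p ∈ PhyloSet (n + 1) ↔ ∃ q ∈ PhyloSet n, p ∈ q.attach (n + 1) := by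
  constructor
  · intro hp
    have hx : n + 1 ∈ p.leafMS := by rw [mem_phyloSet.1 hp, mem_taxa]; omega
    obtain ⟨q, hq⟩ := PTree.exists_mem_attach hx (by rw [leaves_of_mem_phyloSet hp]; omega)
    refine ⟨q, mem_phyloSet.2 ?_, hq⟩
    rw [← Multiset.cons_inj_right (n + 1), ← PTree.leafMS_of_mem_attach hq, mem_phyloSet.1 hp,
      taxa_succ]
  · rintro ⟨q, hq, hp⟩
    rw [mem_phyloSet, PTree.leafMS_of_mem_attach hp, mem_phyloSet.1 hq, taxa_succ]

theorem phyloSet_one : PhyloSet 1 = {PTree.mk (BTree.leaf 1)} := by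
  ext q
  induction q using PTree.ind with | mk t
  have htaxa : taxa 1 = {1} := rfl
  rw [mem_phyloSet, PTree.leafMS_mk, htaxa, Set.mem_singleton_iff]
  exact ⟨fun h => by rw [BTree.eq_leaf_of_leafMS_eq_singleton h], congrArg PTree.leafMS⟩

theorem phyloSet_finite {n : ℕ} (hn : 1 ≤ n) : (PhyloSet n).Finite := by
  induction n, hn using Nat.le_induction with
  | base => rw [phyloSet_one]; exact Set.finite_singleton _
  | succ n hn ih =>
      refine (ih.biUnion fun q _ => (q.attach (n + 1)).finite_toSet).subset fun p hp => ?_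
      obtain ⟨q, hq, hpq⟩ := (mem_phyloSet_succ_iff hn).1 hp
      exact Set.mem_biUnion hq hpq

theorem finsum_phyloSet_succ {M : Type*} [AddCommMonoid M] {n : ℕ} (hn : 1 ≤ n)
    (f : PTree → M) :
    ∑ᶠ p ∈ PhyloSet (n + 1), f p =
      ∑ᶠ q ∈ PhyloSet n, ((q.attach (n + 1)).map f).sum := by
  classical
  have hunion : PhyloSet (n + 1) = ⋃ q ∈ PhyloSet n, {p | p ∈ q.attach (n + 1)} := by
    ext p
    simpa only [Set.mem_iUnion₂, Set.mem_ofPred_eq, exists_prop] using mem_phyloSet_succ_iff hn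
  have hdisj : (PhyloSet n).PairwiseDisjoint fun q => {p | p ∈ q.attach (n + 1)} := by
    intro q₁ h₁ q₂ h₂ hne
    refine Set.disjoint_left.2 fun p hp₁ hp₂ => hne ?_
    rw [← PTree.detach_of_mem_attach (succ_notMem_leafMS h₁) hp₁,
      PTree.detach_of_mem_attach (succ_notMem_leafMS h₂) hp₂]
  rw [hunion, finsum_mem_biUnion hdisj (phyloSet_finite hn)
    fun q _ => (q.attach (n + 1)).finite_toSet]
  refine finsum_mem_congr rfl fun q hq => ?_
  have hnd := PTree.nodup_attach (succ_notMem_leafMS hq)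
    (by rw [mem_phyloSet.1 hq]; exact nodup_taxa n)
  exact hnd.finsum_mem_eq_sum_map f

theorem spTotal_eq (n : ℕ) : SpTotal n = ∑ᶠ q ∈ PhyloSet n, q.sackin := by
  simp only [SpTotal, PTree.sackin_out]

theorem spTotal_succ {n : ℕ} (hn : 1 ≤ n) :
    SpTotal (n + 1) = 2 * (n + 1) * SpTotal n + (n + 1) * aP n := by
  rw [spTotal_eq, spTotal_eq, finsum_phyloSet_succ hn, aP, ← finsum_one, mul_finsum_mem,
    mul_finsum_mem, ← finsum_mem_add_distrib (phyloSet_finite hn)]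
  refine finsum_mem_congr rfl fun q hq => ?_
  rw [PTree.sum_sackin_attach, leaves_of_mem_phyloSet hq, mul_one]

theorem aP_succ {n : ℕ} (hn : 1 ≤ n) : aP (n + 1) = (2 * n - 1) * aP n := by
  rw [aP, aP, ← finsum_one, ← finsum_one, finsum_phyloSet_succ hn, mul_finsum_mem]
  refine finsum_mem_congr rfl fun q hq => ?_
  have hcard := PTree.card_attach (n + 1) q
  rw [leaves_of_mem_phyloSet hq] at hcard
  rw [Multiset.map_const', Multiset.sum_replicate, smul_eq_mul, mul_one]
  omega

/-- `S⁽ᵖ⁾_{n+1} + (n+1) a_{n+1} = 2(n+1) (S⁽ᵖ⁾_n + n a_n)` for `n ≥ 2`. -/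
theorem stmt_14 : ∀ n : ℕ, 2 ≤ n →
    SpTotal (n + 1) + (n + 1) * aP (n + 1) = 2 * (n + 1) * (SpTotal n + n * aP n) := by
  intro n hn
  rw [spTotal_succ (by omega), aP_succ (by omega)]
  obtain ⟨m, rfl⟩ : ∃ m, n = m + 1 := ⟨n - 1, by omega⟩
  rw [show 2 * (m + 1) - 1 = 2 * m + 1 by omega]
  ring
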